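/- Let A be a C*-algebra, let Y be a compact Hausdorff space, and let Φ: I(A) → I(C(Y)) be a generalised Cu-morphism. For y ∈ Y let I_{Φ,y} be the closure of the sum of all closed two-sided ideals I of A with Φ(I) ⊆ C₀(Y∖{y}), and let Γ(y) = {η ∈ QS(A) : η vanishes on I_{Φ,y}}. Suppose γ: Y → A* is weak*-continuous with γ(y) ∈ Γ(y) for every y ∈ Y. Then the map φ: A → C(Y) given by φ(a)(y) = γ(y)(a) is a well-defined contractive completely positive map satisfying I(φ)(I) ⊆ Φ(I) for all I ∈ I(A). -/

import Mathlib

open Filter Topology Set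

universe u v

section IdealPrelim

variable (A : Type u) [AddCommGroup A] [Mul A] [TopologicalSpace A]

/-- A closed two-sided ideal of the C*-algebra `A`. -/
structure ClosedIdeal where
  carrier : Set A
  zero_mem' : (0 : A) ∈ carrier
  add_mem' : ∀ {x y : A}, x ∈ carrier → y ∈ carrier → x + y ∈ carrier
  neg_mem' : ∀ {x : A}, x ∈ carrier → -x ∈ carrier
  mul_mem_left' : ∀ (a : A) {x : A}, x ∈ carrier → a * x ∈ carrier
  mul_mem_right' : ∀ (a : A) {x : A}, x ∈ carrier → x * a ∈ carrier
  isClosed' : IsClosed carrier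

variable {A}

instance : SetLike (ClosedIdeal A) A where
  coe := ClosedIdeal.carrier
  coe_injective := fun I J h => by cases I; cases J; congr

/-- The smallest closed two-sided ideal containing a subset `S`;
`closedIdealGen {a}` is the closed two-sided ideal generated by `a`,
i.e. `closure (A a A)` in the C*-algebra setting. -/
def closedIdealGen (S : Set A) : ClosedIdeal A where
  carrier := ⋂ I ∈ {I : ClosedIdeal A | S ⊆ I.carrier}, I.carrier
  zero_mem' := Set.mem_iInter₂.mpr fun I _ => I.zero_mem'
  add_mem' := fun hx hy => Set.mem_iInter₂.mpr fun I hI =>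
    I.add_mem' (Set.mem_iInter₂.mp hx I hI) (Set.mem_iInter₂.mp hy I hI)
  neg_mem' := fun hx => Set.mem_iInter₂.mpr fun I hI =>
    I.neg_mem' (Set.mem_iInter₂.mp hx I hI)
  mul_mem_left' := fun a _ hx => Set.mem_iInter₂.mpr fun I hI =>
    I.mul_mem_left' a (Set.mem_iInter₂.mp hx I hI)
  mul_mem_right' := fun a _ hx => Set.mem_iInter₂.mpr fun I hI =>
    I.mul_mem_right' a (Set.mem_iInter₂.mp hx I hI)
  isClosed' := isClosed_biInter fun I _ => I.isClosed'

/-- The zero ideal, i.e. the bottom element of the ideal lattice. -/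
def zeroIdeal : ClosedIdeal A := closedIdealGen (∅ : Set A)

/-- The sum `I + J` of two closed two-sided ideals (which, in a C*-algebra, is
the closed two-sided ideal generated by `I ∪ J`). -/
def idealSum (I J : ClosedIdeal A) : ClosedIdeal A :=
  closedIdealGen ((I : Set A) ∪ (J : Set A))

/-- The set of finite sums `x = Σ_{l ∈ s} f l` with `f l ∈ F l`, over a fixed finite
index set `s`.  -/
def partialIdealSum {Λ : Type u} (F : Λ → ClosedIdeal A) (s : Finset Λ) : Set A :=
  { x : A | ∃ f : Λ → A, (∀ l ∈ s, f l ∈ F l) ∧ x = ∑ l ∈ s, f l }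

/-- The algebraic sum `Σ_λ I_λ` of a family of closed two-sided ideals: all finite sums of
elements of the ideals. -/
def idealFamilySum {Λ : Type u} (F : Λ → ClosedIdeal A) : Set A :=
  { x : A | ∃ s : Finset Λ, x ∈ partialIdealSum F s }

/-- `I` is compactly contained in `J`, written `I ⋐ J`: whenever `J` is contained in the
closure of the sum of a family of closed two-sided ideals, `I` is contained in the sum of
finitely many members of the family. -/
def CompactlyContained (I J : ClosedIdeal A) : Prop :=
  ∀ {Λ : Type u} (F : Λ → ClosedIdeal A),
    (J : Set A) ⊆ closure (idealFamilySum F) →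
    ∃ s : Finset Λ, (I : Set A) ⊆ partialIdealSum F s

end IdealPrelim

section Positive

variable {A : Type u} [Mul A] [Star A]

/-- An element of a C*-algebra is positive iff it is of the form `b* b`. -/
def IsPositiveElem (a : A) : Prop := ∃ b : A, a = star b * b

end Positive

section CuMorphism

variable {A : Type u} {B : Type v} [AddCommGroup A] [Mul A] [TopologicalSpace A]
  [AddCommGroup B] [Mul B] [TopologicalSpace B]

/-- A generalised Cu-morphism between ideal lattices: preserves `0`, addition, order and
suprema of increasing nets (the supremum of an increasing net of ideals being the closed
ideal generated by the union, i.e. the closure of the union). -/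
def IsGenCuMorphism (Φ : ClosedIdeal A → ClosedIdeal B) : Prop :=
  Φ zeroIdeal = zeroIdeal ∧
  (∀ I J : ClosedIdeal A, Φ (idealSum I J) = idealSum (Φ I) (Φ J)) ∧
  (∀ I J : ClosedIdeal A, (I : Set A) ⊆ (J : Set A) → (Φ I : Set B) ⊆ (Φ J : Set B)) ∧
  (∀ (Λ : Type u) (_ : Preorder Λ) (_ : IsDirected Λ (· ≤ ·)) (_ : Nonempty Λ),
    ∀ (F : Λ → ClosedIdeal A), Monotone (fun l => (F l : Set A)) →
      Φ (closedIdealGen (⋃ l, (F l : Set A))) = closedIdealGen (⋃ l, (Φ (F l) : Set B)))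

/-- A Cu-morphism is a generalised Cu-morphism preserving compact containment. -/
def IsCuMorphism (Φ : ClosedIdeal A → ClosedIdeal B) : Prop :=
  IsGenCuMorphism Φ ∧
  ∀ I J : ClosedIdeal A, CompactlyContained I J → CompactlyContained (Φ I) (Φ J)

/-- The map induced on ideal lattices by a map of C*-algebras:
`I(φ)(I)` is the closed two-sided ideal generated by the image `φ(I)`
(that is, `closure (B φ(I) B)`). -/
def idealMap (f : A → B) (I : ClosedIdeal A) : ClosedIdeal B :=
  closedIdealGen (f '' (I : Set A))

end CuMorphism

section CP

variable {A : Type u} {B : Type v}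
  [NonUnitalRing A] [StarRing A] [Module ℂ A]
  [NonUnitalRing B] [StarRing B] [Module ℂ B]

/-- A linear map between C*-algebras is completely positive if all of its matrix
amplifications `Mₙ(A) → Mₙ(B)` are positive, positivity of a matrix `M ∈ Mₙ(A)` meaning
that `M = N* N` for some `N ∈ Mₙ(A)`. -/
def IsCompletelyPositive (φ : A →ₗ[ℂ] B) : Prop :=
  ∀ (n : ℕ) (M : Matrix (Fin n) (Fin n) A),
    (∃ N : Matrix (Fin n) (Fin n) A, M = N.conjTranspose * N) →
    ∃ N' : Matrix (Fin n) (Fin n) B, M.map ⇑φ = N'.conjTranspose * N'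

end CP

section Michael

variable {A : Type u} [NonUnitalCStarAlgebra A]
variable {Y : Type v} [TopologicalSpace Y] [CompactSpace Y] [T2Space Y]

/-- A quasi-state on the C*-algebra `A`: a positive linear functional of norm at most `1`
(regarded as an element of the dual with the weak* topology). -/
def IsQuasiState (η : WeakDual ℂ A) : Prop :=
  (∀ x : A, ‖η x‖ ≤ ‖x‖) ∧
  ∀ b : A, 0 ≤ (η (star b * b)).re ∧ (η (star b * b)).im = 0

/-- For a generalised Cu-morphism `Φ : I(A) → I(C(Y))` and `y ∈ Y`, the ideal
`I_{Φ,y}`: the closure of the sum (= the closed ideal generated by the union) of all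
closed two-sided ideals `I ⊆ A` with `Φ(I) ⊆ C₀(Y∖{y})`. -/
noncomputable def idealAtPoint (Φ : ClosedIdeal A → ClosedIdeal C(Y, ℂ)) (y : Y) :
    ClosedIdeal A :=
  closedIdealGen
    (⋃ I ∈ {I : ClosedIdeal A | ∀ g ∈ Φ I, (g : C(Y, ℂ)) y = 0}, (I : Set A))

/-- The carrier `Γ : Y → 2^{A*}`, `Γ(y) = {η ∈ QS(A) : η(I_{Φ,y}) = 0}`. -/
def carrierGamma (Φ : ClosedIdeal A → ClosedIdeal C(Y, ℂ)) (y : Y) :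
    Set (WeakDual ℂ A) :=
  {η | IsQuasiState η ∧ ∀ x ∈ idealAtPoint Φ y, η x = 0}


/-! ### Auxiliary lemmas -/

section AuxGen

variable {A₀ : Type u} [AddCommGroup A₀] [Mul A₀] [TopologicalSpace A₀]

lemma subset_closedIdealGen' (S : Set A₀) : S ⊆ (closedIdealGen S : Set A₀) :=
  fun _ hx => Set.mem_iInter₂.mpr fun _ hI => hI hx

lemma closedIdealGen_subset' {S : Set A₀} (J : ClosedIdeal A₀) (h : S ⊆ (J : Set A₀)) :
    (closedIdealGen S : Set A₀) ⊆ (J : Set A₀) :=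
  fun _ hx => Set.mem_iInter₂.mp hx J h

end AuxGen

section AuxIdealC

variable {Y : Type v} [TopologicalSpace Y] [CompactSpace Y] [T2Space Y]

/-- The bespoke `ClosedIdeal` structure, regarded as a Mathlib `Ideal` of `C(Y, ℂ)`. -/
noncomputable def ClosedIdeal.toIdeal (J : ClosedIdeal C(Y, ℂ)) : Ideal C(Y, ℂ) where
  carrier := J.carrier
  zero_mem' := J.zero_mem'
  add_mem' := fun hx hy => J.add_mem' hx hy
  smul_mem' := fun c {f} hf => by
    simpa [smul_eq_mul] using J.mul_mem_left' c hf

/-- A continuous function vanishing wherever all members of a closed ideal of `C(Y, ℂ)`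
vanish belongs to the ideal. -/
lemma mem_closedIdeal_of_vanishing (J : ClosedIdeal C(Y, ℂ)) (f : C(Y, ℂ))
    (hf : ∀ y : Y, (∀ g ∈ J, (g : C(Y, ℂ)) y = 0) → f y = 0) : f ∈ J := by
  have hcl : IsClosed ((J.toIdeal : Ideal C(Y, ℂ)) : Set C(Y, ℂ)) := J.isClosed'
  have key := ContinuousMap.idealOfSet_ofIdeal_isClosed (𝕜 := ℂ) hcl
  have hmem : f ∈ ContinuousMap.idealOfSet ℂ (ContinuousMap.setOfIdeal J.toIdeal) := by
    rw [ContinuousMap.mem_idealOfSet]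
    intro x hx
    rw [Set.mem_compl_iff, ContinuousMap.notMem_setOfIdeal] at hx
    exact hf x fun g hg => hx hg
  rw [key] at hmem
  exact hmem

end AuxIdealC

section AuxPos

open scoped ComplexOrder

lemma posfun_conj_symm {A : Type u} [NonUnitalCStarAlgebra A] (η : WeakDual ℂ A)
    (hη : ∀ b : A, (η (star b * b)).im = 0) (a b : A) :
    (starRingEnd ℂ) (η (star a * b)) = η (star b * a) := by
  have e1 : star (b + a) * (b + a)
      = (star b * b + star b * a) + (star a * b + star a * a) := by
    rw [star_add, add_mul, mul_add, mul_add]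
  have e2 : star (b + Complex.I • a) * (b + Complex.I • a)
      = (star b * b + Complex.I • (star b * a))
        + ((-Complex.I) • (star a * b) + star a * a) := by
    rw [star_add, star_smul, add_mul, mul_add, mul_add]
    simp [smul_mul_assoc, mul_smul_comm, smul_smul, Complex.conj_I]
  have h1 := hη (b + a)
  have h2 := hη (b + Complex.I • a)
  rw [e1, map_add, map_add, map_add] at h1
  rw [e2, map_add, map_add, map_add, map_smul, map_smul] at h2
  have ha := hη a
  have hb := hη b
  simp only [Complex.add_im, smul_eq_mul, Complex.mul_im, Complex.I_re, Complex.I_im,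
    Complex.neg_re, Complex.neg_im, neg_mul, one_mul, zero_mul, mul_zero] at h1 h2
  apply Complex.ext <;>
    simp only [Complex.conj_re, Complex.conj_im] <;> linarith

lemma quasiState_matrix_posSemidef {A : Type u} [NonUnitalCStarAlgebra A] (η : WeakDual ℂ A)
    (hη : ∀ b : A, 0 ≤ (η (star b * b)).re ∧ (η (star b * b)).im = 0)
    {n : ℕ} (N : Matrix (Fin n) (Fin n) A) :
    (Matrix.of fun i j => η ((N.conjTranspose * N) i j)).PosSemidef := by
  rw [Matrix.posSemidef_iff_dotProduct_mulVec]
  have hconj : ∀ a b : A, (starRingEnd ℂ) (η (star a * b)) = η (star b * a) :=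
    posfun_conj_symm η (fun b => (hη b).2)
  constructor
  · rw [Matrix.IsHermitian]
    ext i j
    rw [Matrix.conjTranspose_apply, Matrix.of_apply, Matrix.of_apply, Matrix.mul_apply,
      Matrix.mul_apply, map_sum, map_sum, star_sum]
    refine Finset.sum_congr rfl fun k _ => ?_
    simp only [Matrix.conjTranspose_apply]
    rw [Complex.star_def]
    exact hconj _ _
  · intro v
    set w : Fin n → A := fun k => ∑ j, v j • N k j with hw
    have hsplit : ∀ k, star (w k) * w k
        = ∑ i, ∑ j, (star (v i) * v j) • (star (N k i) * N k j) := by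
      intro k
      rw [hw]
      simp only
      rw [star_sum, Finset.sum_mul_sum]
      refine Finset.sum_congr rfl fun i _ => Finset.sum_congr rfl fun j _ => ?_
      rw [star_smul, smul_mul_smul_comm]
    have hQ : dotProduct (star v)
          (Matrix.mulVec (Matrix.of fun i j => η ((N.conjTranspose * N) i j)) v)
        = η (∑ k, star (w k) * w k) := by
      rw [map_sum]
      simp_rw [hsplit, map_sum, map_smul, smul_eq_mul]
      rw [dotProduct]
      simp_rw [Matrix.mulVec, dotProduct, Matrix.of_apply, Matrix.mul_apply,
        Matrix.conjTranspose_apply, map_sum, Pi.star_apply, Finset.mul_sum, Finset.sum_mul]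
      simp_rw [Finset.mul_sum]
      conv_rhs => rw [Finset.sum_comm]
      refine Finset.sum_congr rfl fun i _ => ?_
      conv_rhs => rw [Finset.sum_comm]
      refine Finset.sum_congr rfl fun j _ => Finset.sum_congr rfl fun k _ => ?_
      ring
    rw [hQ, map_sum, Complex.le_def]
    constructor
    · rw [Complex.re_sum]
      simp only [Complex.zero_re]
      exact Finset.sum_nonneg fun k _ => (hη (w k)).1
    · rw [Complex.im_sum]
      simp only [Complex.zero_im]
      exact (Finset.sum_eq_zero fun k _ => (hη (w k)).2).symm

end AuxPos

section AuxSqrt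

open scoped Matrix.Norms.L2Operator ComplexOrder

noncomputable instance matrixCStarAlgebra {n : ℕ} :
    CStarAlgebra (Matrix (Fin n) (Fin n) ℂ) where

variable {Y : Type v} [TopologicalSpace Y] [CompactSpace Y]

lemma exists_cont_sqrt {n : ℕ} (G : C(Y, Matrix (Fin n) (Fin n) ℂ))
    (hG : ∀ y, (G y).PosSemidef) :
    ∃ b : C(Y, Matrix (Fin n) (Fin n) ℂ), star b * b = G := by
  have hsa : IsSelfAdjoint G := by
    rw [IsSelfAdjoint]
    ext1 y
    show star (G y) = G y
    exact (hG y).1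
  have hspec : spectrum ℝ G ⊆ Set.Ici (0:ℝ) := by
    intro x hx
    rw [Set.mem_Ici]
    by_contra hx0
    push_neg at hx0
    rw [spectrum.mem_iff] at hx
    apply hx
    set c : ℝ := -x with hc
    have hcpos : (0:ℝ) < c := by rw [hc]; linarith
    set D : Matrix (Fin n) (Fin n) ℂ := Matrix.diagonal (fun _ => (c:ℂ)) with hD
    have hDpos : D.PosDef := by
      rw [hD, Matrix.posDef_diagonal_iff]
      intro i
      exact Complex.zero_lt_real.mpr hcpos
    have hposdef : ∀ y : Y, (G y + D).PosDef := fun y =>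
      Matrix.PosDef.posSemidef_add (hG y) hDpos
    set H : C(Y, Matrix (Fin n) (Fin n) ℂ) := G + ContinuousMap.const Y D with hH
    have hHy : ∀ y, H y = G y + D := fun y => rfl
    have hdet : ∀ y, (H y).det ≠ 0 := fun y => ((hposdef y).det_pos.ne' : (H y).det ≠ 0)
    have hVcont : Continuous fun y => (H y)⁻¹ := by
      have heq : (fun y => (H y)⁻¹) = fun y => ((H y).det)⁻¹ • (H y).adjugate := by
        funext y
        rw [Matrix.inv_def, Ring.inverse_eq_inv]
      rw [heq]
      exact ((H.continuous.matrix_det).inv₀ hdet).smul H.continuous.matrix_adjugate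
    set V : C(Y, Matrix (Fin n) (Fin n) ℂ) := ⟨fun y => (H y)⁻¹, hVcont⟩ with hV
    have hkey : algebraMap ℝ C(Y, Matrix (Fin n) (Fin n) ℂ) x - G = -H := by
      ext1 y
      show algebraMap ℝ C(Y, Matrix (Fin n) (Fin n) ℂ) x y - G y = -(H y)
      rw [hHy]
      have h1 : algebraMap ℝ C(Y, Matrix (Fin n) (Fin n) ℂ) x y
          = algebraMap ℝ (Matrix (Fin n) (Fin n) ℂ) x := rfl
      have h2 : algebraMap ℝ (Matrix (Fin n) (Fin n) ℂ) x = -D := by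
        rw [hD, Algebra.algebraMap_eq_smul_one]
        ext i j
        by_cases h : i = j <;>
          simp [h, Matrix.one_apply, Matrix.diagonal_apply, hc, Complex.real_smul]
      rw [h1, h2]
      abel
    rw [hkey]
    refine IsUnit.neg (isUnit_iff_exists.mpr ⟨V, ?_, ?_⟩) <;> ext1 y
    · show H y * (H y)⁻¹ = (1 : C(Y, Matrix (Fin n) (Fin n) ℂ)) y
      rw [ContinuousMap.one_apply]
      exact Matrix.mul_nonsing_inv _ (hdet y).isUnit
    · show (H y)⁻¹ * H y = (1 : C(Y, Matrix (Fin n) (Fin n) ℂ)) y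
      rw [ContinuousMap.one_apply]
      exact Matrix.nonsing_inv_mul _ (hdet y).isUnit
  letI : ContinuousFunctionalCalculus ℝ C(Y, Matrix (Fin n) (Fin n) ℂ) IsSelfAdjoint :=
    IsometricContinuousFunctionalCalculus.toContinuousFunctionalCalculus
      (self := IsSelfAdjoint.instIsometricContinuousFunctionalCalculus)
  set b := cfc Real.sqrt G with hb
  have hbsa : IsSelfAdjoint b := cfc_predicate Real.sqrt G
  refine ⟨b, ?_⟩
  rw [hbsa.star_eq]
  calc b * b = cfc (fun z : ℝ => Real.sqrt z * Real.sqrt z) G := (cfc_mul _ _ G).symm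
  _ = cfc (id : ℝ → ℝ) G := cfc_congr fun z hz => Real.mul_self_sqrt (hspec hz)
  _ = G := cfc_id ℝ G

lemma exists_cont_sqrt_gram {A : Type u} [NonUnitalCStarAlgebra A] (η : Y → WeakDual ℂ A)
    (hη : ∀ y, ∀ b : A, 0 ≤ ((η y) (star b * b)).re ∧ ((η y) (star b * b)).im = 0)
    {n : ℕ} (N : Matrix (Fin n) (Fin n) A) (G : C(Y, Matrix (Fin n) (Fin n) ℂ))
    (hGy : ∀ y, G y = Matrix.of fun i j => (η y) ((N.conjTranspose * N) i j)) :
    ∃ b : C(Y, Matrix (Fin n) (Fin n) ℂ), star b * b = G := by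
  apply exists_cont_sqrt
  intro y
  rw [hGy]
  exact quasiState_matrix_posSemidef (η y) (hη y) N

end AuxSqrt

/-- If `γ : Y → A*` is a weak*-continuous selection of the carrier `Γ`
associated with a generalised Cu-morphism `Φ : I(A) → I(C(Y))`, then
`φ(a)(y) := γ(y)(a)` defines a contractive completely positive map `φ : A → C(Y)` with
`I(φ)(I) ⊆ Φ(I)` for every closed two-sided ideal `I` of `A`. -/
theorem selection_gives_contractive_cp_map
    (Φ : ClosedIdeal A → ClosedIdeal C(Y, ℂ)) (hΦ : IsGenCuMorphism Φ)
    (γ : Y → WeakDual ℂ A) (hγcont : Continuous γ)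
    (hγsel : ∀ y : Y, γ y ∈ carrierGamma Φ y) :
    ∃ φ : A →ₗ[ℂ] C(Y, ℂ),
      (∀ (a : A) (y : Y), (φ a : C(Y, ℂ)) y = γ y a) ∧
      IsCompletelyPositive φ ∧
      (∀ a : A, ‖φ a‖ ≤ ‖a‖) ∧
      (∀ I : ClosedIdeal A, (idealMap (⇑φ) I : Set C(Y, ℂ)) ⊆ (Φ I : Set C(Y, ℂ))) := by
  classical
  have hqs : ∀ y, IsQuasiState (γ y) := fun y => (hγsel y).1
  have hcont : ∀ a : A, Continuous fun y : Y => γ y a :=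
    fun a => (WeakDual.eval_continuous a).comp hγcont
  set φ : A →ₗ[ℂ] C(Y, ℂ) :=
    { toFun := fun a => ⟨fun y => γ y a, hcont a⟩
      map_add' := fun a b => by ext y; exact map_add (γ y) a b
      map_smul' := fun c a => by
        ext y
        show γ y (c • a) = (c • (⟨fun y => γ y a, hcont a⟩ : C(Y, ℂ))) y
        rw [ContinuousMap.smul_apply]
        exact map_smul (γ y) c a } with hφdef
  have hφapp : ∀ (a : A) (y : Y), (φ a : C(Y, ℂ)) y = γ y a := fun a y => rfl
  refine ⟨φ, hφapp, ?_, ?_, ?_⟩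
  · -- complete positivity
    rintro n M ⟨N, rfl⟩
    have hGcont : Continuous fun y => Matrix.of fun i j => γ y ((N.conjTranspose * N) i j) :=
      continuous_matrix fun i j => hcont _
    set G : C(Y, Matrix (Fin n) (Fin n) ℂ) := ⟨_, hGcont⟩ with hGdef
    obtain ⟨b, hb⟩ := exists_cont_sqrt_gram γ (fun y => (hqs y).2) N G (fun y => rfl)
    refine ⟨Matrix.of fun i j => ⟨fun y => b y i j, b.continuous.matrix_elem i j⟩, ?_⟩
    ext i j y
    show γ y ((N.conjTranspose * N) i j) = _
    have h1 : ((Matrix.of fun i j => (⟨fun y => b y i j,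
        b.continuous.matrix_elem i j⟩ : C(Y, ℂ))).conjTranspose
        * (Matrix.of fun i j => (⟨fun y => b y i j,
        b.continuous.matrix_elem i j⟩ : C(Y, ℂ)))) i j y
        = ((star b * b) y) i j := by
      simp only [Matrix.mul_apply, Matrix.conjTranspose_apply, ContinuousMap.coe_sum,
        Finset.sum_apply, ContinuousMap.mul_apply, ContinuousMap.star_apply,
        Matrix.of_apply, ContinuousMap.coe_mk, Matrix.star_eq_conjTranspose]
    rw [h1, hb]
    rfl
  · -- contractivity
    intro a
    exact (ContinuousMap.norm_le _ (norm_nonneg a)).mpr fun y => (hqs y).1 a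
  · -- ideals
    intro I
    refine closedIdealGen_subset' (Φ I) ?_
    rintro f ⟨a, ha, rfl⟩
    have : φ a ∈ Φ I := by
      apply mem_closedIdeal_of_vanishing
      intro y hy
      have hI : (I : Set A) ⊆ (idealAtPoint Φ y : Set A) :=
        Set.Subset.trans (Set.subset_biUnion_of_mem (u := fun J : ClosedIdeal A => (J : Set A))
          (show I ∈ {J : ClosedIdeal A | ∀ g ∈ Φ J, (g : C(Y, ℂ)) y = 0} from hy))
          (subset_closedIdealGen' _)
      exact (hγsel y).2 a (hI ha)
    exact this


end Michael
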